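/- Residual norm via the cospatial factor: Under the hypotheses of the cospatial residual relation (B = V_1 B̂, the block Arnoldi relation A 𝒱_m = 𝒱_m ℋ_m + V_{m+1} H_{m+1,m} Ê_m^*, ℋ_m + M Ê_m^* invertible, Ξ_m := (ℋ_m + M Ê_m^*)^{-1} Ê_1 B̂, X_m := 𝒱_m Ξ_m, R_m := B − A X_m), assume additionally that the columns of 𝒱_{m+1} := [V_1 … V_{m+1}] ∈ ℂ^{n×(m+1)s} are orthonormal, i.e. 𝒱_{m+1}^* 𝒱_{m+1} = I_{(m+1)s}. Then ‖R_m‖_F² = ‖M (Ê_m^* Ξ_m)‖_F² + ‖H_{m+1,m} (Ê_m^* Ξ_m)‖_F²; equivalently, ‖R_m‖_F equals the Frobenius norm of the (m+1)s × s matrix obtained by stacking M on top of −H_{m+1,m}, multiplied on the right by Ê_m^* Ξ_m. -/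
import Mathlib


open Matrix

noncomputable section

/-- Concatenation of `m` block vectors, each `n × s`, into an `n × (m·s)` matrix. -/
def blockCat {n m s : ℕ} (V : Fin m → Matrix (Fin n) (Fin s) ℂ) :
    Matrix (Fin n) (Fin m × Fin s) ℂ :=
  Matrix.of fun i p => V p.1 i p.2

/-- The `k`-th block unit vector `Ê_k = e_k ⊗ I_s ∈ ℂ^{ms × s}`. -/
def blockUnit (m s : ℕ) (k : Fin m) : Matrix (Fin m × Fin s) (Fin s) ℂ :=
  Matrix.of fun p j => if p.1 = k ∧ p.2 = j then 1 else 0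

/-- Frobenius norm of a complex matrix. -/
def frobNorm {I J : Type*} [Fintype I] [Fintype J] (X : Matrix I J ℂ) : ℝ :=
  Real.sqrt (∑ i, ∑ j, ‖X i j‖ ^ 2)

lemma sumSq_eq_trace {I J : Type*} [Fintype I] [Fintype J] (X : Matrix I J ℂ) :
    ∑ i, ∑ j, ‖X i j‖ ^ 2 = (Matrix.trace (Xᴴ * X)).re := by
  rw [Finset.sum_comm]
  simp [Matrix.trace, Matrix.mul_apply, Matrix.conjTranspose_apply, Complex.sq_norm,
    Complex.normSq_apply]

lemma sumSq_mul_orth {I J K : Type*} [Fintype I] [Fintype J] [Fintype K] [DecidableEq J]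
    (C : Matrix I J ℂ) (W : Matrix J K ℂ) (h : Cᴴ * C = 1) :
    ∑ i, ∑ j, ‖(C * W) i j‖ ^ 2 = ∑ i, ∑ j, ‖W i j‖ ^ 2 := by
  rw [sumSq_eq_trace, sumSq_eq_trace, conjTranspose_mul, Matrix.mul_assoc, ← Matrix.mul_assoc Cᴴ C W, h, Matrix.one_mul]

lemma frob_sq {I J : Type*} [Fintype I] [Fintype J] (X : Matrix I J ℂ) :
    frobNorm X ^ 2 = ∑ i, ∑ j, ‖X i j‖ ^ 2 := by
  rw [frobNorm, Real.sq_sqrt]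
  positivity

lemma blockCat_mul_blockUnit {n m s : ℕ} (W : Fin m → Matrix (Fin n) (Fin s) ℂ) (k : Fin m) :
    blockCat W * blockUnit m s k = W k := by
  ext i j
  simp [Matrix.mul_apply, blockCat, blockUnit, Fintype.sum_prod_type, Finset.sum_ite_eq,
    ite_and, mul_ite]

/-- Residual norm via the cospatial factor. -/
theorem residual_norm_via_cospatial_factor
    {n m s : ℕ} (hn : 0 < n) (hm : 0 < m) (hs : 0 < s)
    (A : Matrix (Fin n) (Fin n) ℂ) (B : Matrix (Fin n) (Fin s) ℂ)
    (V : Fin (m + 1) → Matrix (Fin n) (Fin s) ℂ)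
    (ℋ : Matrix (Fin m × Fin s) (Fin m × Fin s) ℂ)
    (H Bhat : Matrix (Fin s) (Fin s) ℂ)
    (M : Matrix (Fin m × Fin s) (Fin s) ℂ)
    (Em E1 : Matrix (Fin m × Fin s) (Fin s) ℂ)
    (hEm : Em = blockUnit m s ⟨m - 1, by omega⟩)
    (hE1 : E1 = blockUnit m s ⟨0, hm⟩)
    (𝒱 : Matrix (Fin n) (Fin m × Fin s) ℂ)
    (h𝒱 : 𝒱 = blockCat fun k => V k.castSucc)
    (hB : B = V 0 * Bhat)
    (harnoldi : A * 𝒱 = 𝒱 * ℋ + V (Fin.last m) * H * Emᴴ)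
    (hinv : IsUnit (ℋ + M * Emᴴ))
    (Ξ : Matrix (Fin m × Fin s) (Fin s) ℂ)
    (hΞ : Ξ = (ℋ + M * Emᴴ)⁻¹ * E1 * Bhat)
    (X R : Matrix (Fin n) (Fin s) ℂ)
    (hX : X = 𝒱 * Ξ) (hR : R = B - A * X)
    (horth : (blockCat V)ᴴ * blockCat V = 1) :
    frobNorm R ^ 2 = frobNorm (M * (Emᴴ * Ξ)) ^ 2 + frobNorm (H * (Emᴴ * Ξ)) ^ 2
    ∧ frobNorm R = frobNorm (Matrix.fromRows M (-H) * (Emᴴ * Ξ)) := by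
  set Y : Matrix (Fin s) (Fin s) ℂ := Emᴴ * Ξ with hY
  -- key algebraic identity
  have hdet : IsUnit (ℋ + M * Emᴴ).det := (Matrix.isUnit_iff_isUnit_det _).mp hinv
  have key : (ℋ + M * Emᴴ) * Ξ = E1 * Bhat := by
    rw [hΞ, ← Matrix.mul_assoc, ← Matrix.mul_assoc, Matrix.mul_nonsing_inv _ hdet,
      Matrix.one_mul]
  have hHΞ : ℋ * Ξ = E1 * Bhat - M * Y := by
    rw [hY, ← Matrix.mul_assoc, ← key, Matrix.add_mul, add_sub_cancel_right]
  -- 𝒱 * E1 = V 0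
  have h0 : (⟨0, hm⟩ : Fin m).castSucc = (0 : Fin (m+1)) := by
    ext; simp
  have hVE1 : 𝒱 * E1 = V 0 := by
    rw [h𝒱, hE1, blockCat_mul_blockUnit]
    rw [h0]
  -- form of R
  have hRform : R = 𝒱 * (M * Y) - V (Fin.last m) * (H * Y) := by
    rw [hR, hX, hB, ← Matrix.mul_assoc, harnoldi, Matrix.add_mul, Matrix.mul_assoc 𝒱 ℋ Ξ, hHΞ,
      Matrix.mul_sub, ← Matrix.mul_assoc 𝒱 E1 Bhat, hVE1, hY,
      Matrix.mul_assoc (V (Fin.last m) * H) Emᴴ Ξ,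
      Matrix.mul_assoc (V (Fin.last m)) H (Emᴴ * Ξ)]
    abel
  -- stacked cospatial factor
  set W : Matrix (Fin (m+1) × Fin s) (Fin s) ℂ :=
    Matrix.of (fun p j => if h : (p.1 : ℕ) < m then (M * Y) (⟨p.1, h⟩, p.2) j
      else -((H * Y) p.2 j)) with hW
  have hfk : ∀ (k : Fin m) (h : ((Fin.castSucc k : Fin (m+1)) : ℕ) < m),
      (⟨((Fin.castSucc k : Fin (m+1)) : ℕ), h⟩ : Fin m) = k := by
    intro k h
    apply Fin.ext
    simp
  have hRW : R = blockCat V * W := by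
    rw [hRform, hW]
    generalize M * Y = P
    generalize H * Y = Q
    ext i j
    rw [Matrix.sub_apply]
    simp only [Matrix.mul_apply, h𝒱, blockCat, Matrix.of_apply, Fintype.sum_prod_type]
    rw [Fin.sum_univ_castSucc]
    have e1 : ∀ (k : Fin m) (t : Fin s),
        (if h : ((Fin.castSucc k : Fin (m+1)) : ℕ) < m
          then P (⟨((Fin.castSucc k : Fin (m+1)) : ℕ), h⟩, t) j
          else -(Q t j)) = P (k, t) j := by
      intro k t
      rw [dif_pos (by simpa using k.isLt), hfk]
    have e2 : ∀ t : Fin s,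
        (if h : ((Fin.last m : Fin (m+1)) : ℕ) < m
          then P (⟨((Fin.last m : Fin (m+1)) : ℕ), h⟩, t) j
          else -(Q t j)) = -(Q t j) := by
      intro t
      rw [dif_neg (by simp)]
    simp only [e1, e2, mul_neg, Finset.sum_neg_distrib]
    rw [sub_eq_add_neg]
  -- sum of squares of W splits
  have hWsum : ∑ p, ∑ j, ‖W p j‖ ^ 2 =
      (∑ p, ∑ j, ‖(M * Y) p j‖ ^ 2) + (∑ t, ∑ j, ‖(H * Y) t j‖ ^ 2) := by
    rw [hW]
    generalize M * Y = P
    generalize H * Y = Q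
    simp only [Matrix.of_apply, Fintype.sum_prod_type]
    rw [Fin.sum_univ_castSucc]
    congr 1
    · refine Finset.sum_congr rfl fun k _ => Finset.sum_congr rfl fun t _ =>
        Finset.sum_congr rfl fun j _ => ?_
      rw [dif_pos (by simpa using k.isLt), hfk]
    · refine Finset.sum_congr rfl fun t _ => Finset.sum_congr rfl fun j _ => ?_
      rw [dif_neg (by simp), norm_neg]
  have hRsum : ∑ i, ∑ j, ‖R i j‖ ^ 2 =
      (∑ p, ∑ j, ‖(M * Y) p j‖ ^ 2) + (∑ t, ∑ j, ‖(H * Y) t j‖ ^ 2) := by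
    rw [hRW, sumSq_mul_orth _ _ horth, hWsum]
  constructor
  · rw [frob_sq, frob_sq, frob_sq, hRsum]
  · rw [frobNorm, frobNorm, hRsum]
    congr 1
    rw [Matrix.fromRows_mul, Fintype.sum_sum_type]
    simp [Matrix.fromRows_apply_inl, Matrix.fromRows_apply_inr, Matrix.neg_mul,
      Matrix.neg_apply, norm_neg]
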